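/- Let T=(V,E) be a forest with n vertices and let k ≥ 2 be an integer. If ≪ is a linear order on V chosen uniformly at random, then E_≪[χ_FF(T,≪)] ≤ k + 1 + n²·4^k/(2k)!. -/

import Mathlib

noncomputable def ffAux {V : Type*} (G : SimpleGraph V) (ord : V → ℕ) (t : ℕ) (v : V) : ℕ :=
  sInf {i : ℕ | 0 < i ∧ ∀ u, G.Adj u v → ∀ h : ord u < t, ffAux G ord (ord u) u ≠ i}
termination_by t
decreasing_by exact h

/-- The color that First-Fit assigns to vertex `v` when coloring `G` in the
presentation order in which `u` comes before `w` iff `ord u < ord w`. -/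
noncomputable def ffColor {V : Type*} (G : SimpleGraph V) (ord : V → ℕ) (v : V) : ℕ :=
  ffAux G ord (ord v) v

/-- The number of colors used by First-Fit on `G` in the order given by `ord`. -/
noncomputable def ffNumColors {V : Type*} [Fintype V] (G : SimpleGraph V) (ord : V → ℕ) : ℕ :=
  (Finset.univ.image (ffColor G ord)).card

/-- Expected number of colors used by First-Fit on `G` in a uniformly random order. -/
noncomputable def ffExpect {V : Type*} [Fintype V] (G : SimpleGraph V) : ℝ :=
  letI := Classical.decEq V
  (∑ e : V ≃ Fin (Fintype.card V), (ffNumColors G (fun v => (e v : ℕ)) : ℝ)) /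
    (Nat.factorial (Fintype.card V) : ℝ)

/-- Expected value of χ_FF(G,≪)/χ(G) over a uniformly random order ≪. -/
noncomputable def ffRatioExpect {V : Type*} [Fintype V] (G : SimpleGraph V) : ℝ :=
  letI := Classical.decEq V
  (∑ e : V ≃ Fin (Fintype.card V),
      (ffNumColors G (fun v => (e v : ℕ)) : ℝ) / (G.chromaticNumber.toNat : ℝ)) /
    (Nat.factorial (Fintype.card V) : ℝ)

/-- Probability, over a uniformly random presentation order of the vertex set `V`,
of the event `P` (a property of the position function of the order). -/
noncomputable def ffProb {V : Type*} [Fintype V] (P : (V → ℕ) → Prop) : ℝ :=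
  letI := Classical.decEq V
  letI := Classical.decPred (fun e : V ≃ Fin (Fintype.card V) => P (fun v => (e v : ℕ)))
  ((Finset.univ.filter (fun e : V ≃ Fin (Fintype.card V) => P (fun v => (e v : ℕ)))).card : ℝ) /
    (Nat.factorial (Fintype.card V) : ℝ)

/-- `RFF n`: the maximum over all forests on `n` vertices of the expected value of
χ_FF(T,≪)/χ(T) over a uniformly random order ≪. -/
noncomputable def RFF (n : ℕ) : ℝ :=
  sSup {x : ℝ | ∃ G : SimpleGraph (Fin n), G.IsAcyclic ∧ x = ffRatioExpect G}

/-- `l` is a bidirected (simple) path in the orientation of `G` induced by `ord`. -/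
def IsBidirected {V : Type*} (G : SimpleGraph V) (ord : V → ℕ) (l : List V) : Prop :=
  l.Nodup ∧ ∃ (l₁ l₂ : List V) (m : V), l = l₁ ++ m :: l₂ ∧
    List.Chain' (fun a b => G.Adj a b ∧ ord a < ord b) (l₁ ++ [m]) ∧
    List.Chain' (fun a b => G.Adj a b ∧ ord b < ord a) (m :: l₂)

/-- Vertices of the tree `T^r_i`: lists of pairs `(j,q)` with strictly decreasing
positive first coordinates, starting below `i`. -/
def TVert (r i : ℕ) : Type :=
  {l : List (Fin i × Fin r) //
    List.Chain (fun a b => b < a) i (l.map fun p => (p.1 : ℕ)) ∧ ∀ p ∈ l, 1 ≤ (p.1 : ℕ)}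

/-- The root of `T^r_i`. -/
def TRoot (r i : ℕ) : TVert r i := ⟨[], List.Chain.nil, by simp⟩

/-- The tree `T^r_i`: a vertex is adjacent to each of its one-step extensions. -/
def TGraph (r i : ℕ) : SimpleGraph (TVert r i) :=
  SimpleGraph.fromRel (fun u v => ∃ x, v.val = u.val ++ [x])

instance (r i : ℕ) : Finite (TVert r i) := by
  have hinj : Function.Injective
      (fun v : TVert r i => (⟨v.val, by
        have h := v.property.1
        haveI : IsTrans ℕ (fun a b => b < a) := ⟨fun a b c h1 h2 => lt_trans h2 h1⟩
        replace h := List.IsChain.pairwise h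
        have h2 := (List.pairwise_cons.mp h).2
        exact List.Nodup.of_map _ (h2.imp fun hab => (ne_of_lt hab).symm)⟩ :
        {l : List (Fin i × Fin r) // l.Nodup})) :=
    fun a b hab => Subtype.ext (Subtype.mk_eq_mk.mp hab)
  exact Finite.of_injective _ hinj

noncomputable instance (r i : ℕ) : Fintype (TVert r i) := Fintype.ofFinite _

section Basic
variable {V : Type*} (G : SimpleGraph V) (ord : V → ℕ)

lemma ffColor_eq (v : V) :
    ffColor G ord v =
      sInf {i : ℕ | 0 < i ∧ ∀ u, G.Adj u v → ord u < ord v → ffColor G ord u ≠ i} := by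
  rw [ffColor, ffAux]
  rfl

variable [Fintype V]

lemma ffColor_mem (v : V) :
    ffColor G ord v ∈
      {i : ℕ | 0 < i ∧ ∀ u, G.Adj u v → ord u < ord v → ffColor G ord u ≠ i} := by
  rw [ffColor_eq]
  apply Nat.sInf_mem
  refine ⟨(Finset.univ.sup (ffColor G ord)) + 1, Nat.succ_pos _, fun u _ _ => ?_⟩
  have : ffColor G ord u ≤ Finset.univ.sup (ffColor G ord) :=
    Finset.le_sup (Finset.mem_univ u)
  omega

lemma ffColor_pos (v : V) : 0 < ffColor G ord v := (ffColor_mem G ord v).1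

lemma ffColor_exists_of_lt {v : V} {j : ℕ} (hj : 0 < j) (hjv : j < ffColor G ord v) :
    ∃ u, G.Adj u v ∧ ord u < ord v ∧ ffColor G ord u = j := by
  have hnm : j ∉ {i : ℕ | 0 < i ∧ ∀ u, G.Adj u v → ord u < ord v → ffColor G ord u ≠ i} := by
    intro hm
    have := Nat.sInf_le hm
    rw [← ffColor_eq] at this
    omega
  simp only [Set.mem_setOf_eq, not_and, not_forall] at hnm
  obtain ⟨u, hadj, hlt, hne⟩ := hnm hj
  exact ⟨u, hadj, hlt, by omega⟩

end Basic

section Asc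
variable {V : Type*} (G : SimpleGraph V) (ord : V → ℕ) [Fintype V]

lemma ascChain_aux : ∀ (N : ℕ) (v : V), ord v ≤ N →
    ∃ l : List V, l ≠ [] ∧ l.getLast? = some v ∧ l.length = ffColor G ord v ∧
      List.Chain' (fun a b => G.Adj a b ∧ ord a < ord b) l := by
  intro N
  induction N with
  | zero =>
    intro v hv
    refine ⟨[v], by simp, by simp, ?_, List.isChain_singleton v⟩
    have h1 := ffColor_pos G ord v
    by_contra hne
    have h2 : 1 < ffColor G ord v := by simp at hne ⊢; omega
    obtain ⟨u, _, hlt, _⟩ := ffColor_exists_of_lt G ord one_pos h2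
    omega
  | succ N ih =>
    intro v hv
    by_cases h1 : ffColor G ord v = 1
    · exact ⟨[v], by simp, by simp, by simp [h1], List.isChain_singleton v⟩
    · have h2 : 1 ≤ ffColor G ord v - 1 := by
        have := ffColor_pos G ord v; omega
      obtain ⟨u, hadj, hlt, hcol⟩ := ffColor_exists_of_lt G ord (by omega)
        (show ffColor G ord v - 1 < ffColor G ord v by omega)
      obtain ⟨l, hne, hlast, hlen, hch⟩ := ih u (by omega)
      refine ⟨l ++ [v], by simp, by simp, by simp [hlen, hcol]; have := ffColor_pos G ord v; omega, ?_⟩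
      refine List.isChain_append.mpr ?_
      refine ⟨hch, List.isChain_singleton _, fun x hx y hy => ?_⟩
      simp at hy
      rw [hlast] at hx
      simp at hx
      subst hx hy
      exact ⟨hadj, hlt⟩

lemma ascChain (v : V) :
    ∃ l : List V, l ≠ [] ∧ l.getLast? = some v ∧ l.length = ffColor G ord v ∧
      List.Chain' (fun a b => G.Adj a b ∧ ord a < ord b) l :=
  ascChain_aux G ord (ord v) v le_rfl

end Asc


open List

variable {V : Type*} (G : SimpleGraph V)

lemma walk_of_chain : ∀ (l : List V) (h : l ≠ []), List.Chain' G.Adj l →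
    ∃ w : G.Walk (l.head h) (l.getLast h), w.support = l
  | [a], _, _ => ⟨SimpleGraph.Walk.nil, by simp⟩
  | a :: b :: t, _, hc => by
    obtain ⟨hab, hc'⟩ := List.isChain_cons_cons.mp hc
    obtain ⟨w, hw⟩ := walk_of_chain (b :: t) (by simp) hc'
    have hg : (a :: b :: t).getLast (by simp) = (b :: t).getLast (by simp) :=
      List.getLast_cons (by simp)
    refine ⟨(SimpleGraph.Walk.cons hab w).copy rfl hg.symm, ?_⟩
    exact (SimpleGraph.Walk.support_copy _ _ _).trans (congrArg (a :: ·) hw)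

lemma chain_eq_of_acyclic (hT : G.IsAcyclic) {l₁ l₂ : List V} (h₁ : l₁ ≠ []) (h₂ : l₂ ≠ [])
    (hc₁ : List.Chain' G.Adj l₁) (hc₂ : List.Chain' G.Adj l₂)
    (hn₁ : l₁.Nodup) (hn₂ : l₂.Nodup)
    (hh : l₁.head h₁ = l₂.head h₂) (hl : l₁.getLast h₁ = l₂.getLast h₂) : l₁ = l₂ := by
  obtain ⟨w₁, hw₁⟩ := walk_of_chain G l₁ h₁ hc₁
  obtain ⟨w₂, hw₂⟩ := walk_of_chain G l₂ h₂ hc₂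
  have hp₁ : w₁.IsPath := (SimpleGraph.Walk.isPath_def w₁).mpr (hw₁.symm ▸ hn₁)
  have hp₂ : (w₂.copy hh.symm hl.symm).IsPath := by
    rw [SimpleGraph.Walk.isPath_def, SimpleGraph.Walk.support_copy, hw₂]; exact hn₂
  have heq := hT.path_unique ⟨w₁, hp₁⟩ ⟨w₂.copy hh.symm hl.symm, hp₂⟩
  have hsup : w₁.support = (w₂.copy hh.symm hl.symm).support :=
    congrArg (fun p : G.Path _ _ => p.1.support) heq
  rw [hw₁, SimpleGraph.Walk.support_copy, hw₂] at hsup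
  exact hsup

/-- `f` is unimodal along the list `p`. -/
def UniOn {V : Type*} (p : List V) (f : V → ℕ) : Prop :=
  ∃ a b : List V, p = a ++ b ∧ List.Chain' (fun u w => f u < f w) a ∧
    List.Chain' (fun u w => f w < f u) b

lemma getLast_eq_of_opt {α : Type*} {l : List α} (h : l ≠ []) {x : α}
    (hx : l.getLast? = some x) : l.getLast h = x := by
  rw [l.getLast?_eq_getLast h] at hx; exact Option.some.inj hx

lemma head_eq_of_opt {α : Type*} {l : List α} (h : l ≠ []) {x : α}
    (hx : l.head? = some x) : l.head h = x := by
  rw [List.head?_eq_head h] at hx; exact Option.some.inj hx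

lemma chain_eq_of_acyclic' {V : Type*} (G : SimpleGraph V) (hT : G.IsAcyclic)
    {l₁ l₂ : List V} (h₁ : l₁ ≠ []) (h₂ : l₂ ≠ [])
    (hc₁ : List.Chain' G.Adj l₁) (hc₂ : List.Chain' G.Adj l₂)
    (hn₁ : l₁.Nodup) (hn₂ : l₂.Nodup) {x y : V}
    (hh₁ : l₁.head? = some x) (hh₂ : l₂.head? = some x)
    (hl₁ : l₁.getLast? = some y) (hl₂ : l₂.getLast? = some y) : l₁ = l₂ :=
  chain_eq_of_acyclic G hT h₁ h₂ hc₁ hc₂ hn₁ hn₂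
    (by rw [head_eq_of_opt h₁ hh₁, head_eq_of_opt h₂ hh₂])
    (by rw [getLast_eq_of_opt h₁ hl₁, getLast_eq_of_opt h₂ hl₂])

section ChainFacts
variable {V : Type*} {G : SimpleGraph V} {ord : V → ℕ} {l : List V}

lemma asc_pairwise (h : List.Chain' (fun a b => G.Adj a b ∧ ord a < ord b) l) :
    List.Pairwise (fun a b => ord a < ord b) l := by
  haveI : IsTrans V (fun a b => ord a < ord b) := ⟨fun a b c h1 h2 => lt_trans h1 h2⟩
  exact List.isChain_iff_pairwise.mp (h.imp fun _ _ h => h.2)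

lemma asc_nodup (h : List.Chain' (fun a b => G.Adj a b ∧ ord a < ord b) l) : l.Nodup :=
  (asc_pairwise h).imp fun hab he => absurd (he ▸ hab) (lt_irrefl _)

lemma asc_le_getLast (h : List.Chain' (fun a b => G.Adj a b ∧ ord a < ord b) l)
    {x : V} (hx : l.getLast? = some x) : ∀ a ∈ l, ord a ≤ ord x := by
  have hne : l ≠ [] := by rintro rfl; simp at hx
  have hp := asc_pairwise h
  have hlx := getLast_eq_of_opt hne hx
  intro a ha
  rcases List.mem_append.mp ((List.dropLast_append_getLast hne) ▸ ha) with h1 | h1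
  · have := (List.pairwise_append.mp ((List.dropLast_append_getLast hne).symm ▸ hp)).2.2
    have := this a h1 _ (show l.getLast hne ∈ [l.getLast hne] by simp)
    rw [hlx] at this
    exact le_of_lt this
  · simp at h1; rw [h1, hlx]

end ChainFacts

section Construct
variable {V : Type*} (G : SimpleGraph V) (ord : V → ℕ) [Fintype V]

lemma exists_uni_list (hT : G.IsAcyclic) {v : V} {c : ℕ}
    (hc : 3 ≤ c) (hv : c ≤ ffColor G ord v) :
    ∃ l : List V, l.length = 2 * c - 2 ∧ l.Nodup ∧ List.Chain' G.Adj l ∧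
      UniOn l ord := by
  obtain ⟨x, hxadj, hxlt, hxcol⟩ := ffColor_exists_of_lt G ord
    (show 0 < c - 2 by omega) (show c - 2 < ffColor G ord v by omega)
  obtain ⟨y, hyadj, hylt, hycol⟩ := ffColor_exists_of_lt G ord
    (show 0 < c - 1 by omega) (show c - 1 < ffColor G ord v by omega)
  have hxy : x ≠ y := fun h => by rw [h, hycol] at hxcol; omega
  obtain ⟨l₁, h₁ne, h₁last, h₁len, h₁ch⟩ := ascChain G ord x
  obtain ⟨l₂, h₂ne, h₂last, h₂len, h₂ch⟩ := ascChain G ord y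
  have h₁lt : ∀ a ∈ l₁, ord a < ord v := fun a ha =>
    lt_of_le_of_lt (asc_le_getLast h₁ch h₁last a ha) hxlt
  have h₂lt : ∀ a ∈ l₂, ord a < ord v := fun a ha =>
    lt_of_le_of_lt (asc_le_getLast h₂ch h₂last a ha) hylt
  -- cross disjointness
  have hdisj : ∀ w ∈ l₁, w ∉ l₂ := by
    intro w hw₁ hw₂
    obtain ⟨s₁, t₁, hst₁⟩ := List.append_of_mem hw₁
    obtain ⟨s₂, t₂, hst₂⟩ := List.append_of_mem hw₂
    have hL₁ : (w :: t₁).getLast? = some x := by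
      rw [hst₁, List.getLast?_append_of_ne_nil s₁ (by simp)] at h₁last; exact h₁last
    have hL₂ : (w :: t₂).getLast? = some y := by
      rw [hst₂, List.getLast?_append_of_ne_nil s₂ (by simp)] at h₂last; exact h₂last
    have hsuf₁ : List.Chain' G.Adj (w :: t₁) :=
      ((h₁ch.suffix ⟨s₁, hst₁.symm⟩).imp fun _ _ h => h.1)
    have hsuf₂ : List.Chain' G.Adj (w :: t₂) :=
      ((h₂ch.suffix ⟨s₂, hst₂.symm⟩).imp fun _ _ h => h.1)
    have hn₁ : (w :: t₁).Nodup := (asc_nodup h₁ch).sublist (hst₁ ▸ (List.sublist_append_right s₁ _))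
    have hn₂ : (w :: t₂).Nodup := (asc_nodup h₂ch).sublist (hst₂ ▸ (List.sublist_append_right s₂ _))
    have hv₁ : v ∉ (w :: t₁) := fun hv' =>
      absurd (h₁lt v (hst₁ ▸ List.mem_append_right s₁ hv')) (lt_irrefl _)
    have hv₂ : v ∉ (w :: t₂) := fun hv' =>
      absurd (h₂lt v (hst₂ ▸ List.mem_append_right s₂ hv')) (lt_irrefl _)
    have hc₁ : List.Chain' G.Adj ((w :: t₁) ++ [v]) := by
      refine List.isChain_append.mpr ?_
      refine ⟨hsuf₁, List.isChain_singleton _, ?_⟩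
      intro a ha b hb
      rw [hL₁] at ha
      simp at ha hb
      subst ha; subst hb; exact hxadj
    have hc₂ : List.Chain' G.Adj ((w :: t₂) ++ [v]) := by
      refine List.isChain_append.mpr ?_
      refine ⟨hsuf₂, List.isChain_singleton _, ?_⟩
      intro a ha b hb
      rw [hL₂] at ha
      simp at ha hb
      subst ha; subst hb; exact hyadj
    have hnn₁ : ((w :: t₁) ++ [v]).Nodup := by
      rw [List.nodup_append']
      exact ⟨hn₁, List.nodup_singleton v, fun a ha hb => by
        simp at hb; subst hb; exact hv₁ ha⟩
    have hnn₂ : ((w :: t₂) ++ [v]).Nodup := by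
      rw [List.nodup_append']
      exact ⟨hn₂, List.nodup_singleton v, fun a ha hb => by
        simp at hb; subst hb; exact hv₂ ha⟩
    have heq := chain_eq_of_acyclic' G hT (l₁ := (w :: t₁) ++ [v]) (l₂ := (w :: t₂) ++ [v])
      (by simp) (by simp) hc₁ hc₂ hnn₁ hnn₂ (x := w) (y := v)
      (by simp) (by simp) List.getLast?_concat List.getLast?_concat
    have hteq : w :: t₁ = w :: t₂ := List.append_cancel_right heq
    apply hxy
    have : some x = some y := by rw [← hL₁, ← hL₂, hteq]
    exact Option.some.inj this
  refine ⟨(l₁ ++ [v]) ++ l₂.reverse, ?_, ?_, ?_, (l₁ ++ [v]), l₂.reverse, rfl, ?_, ?_⟩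
  · simp [h₁len, h₂len, hxcol, hycol]; omega
  · rw [List.nodup_append']
    refine ⟨by
      rw [List.nodup_append']
      exact ⟨asc_nodup h₁ch, List.nodup_singleton v, fun a ha hb => by
        simp at hb; subst hb; exact absurd (h₁lt _ ha) (lt_irrefl _)⟩,
      by simpa using asc_nodup h₂ch, ?_⟩
    intro a ha hb
    simp at ha hb
    rcases ha with ha | ha
    · exact hdisj a ha hb
    · subst ha; exact absurd (h₂lt a hb) (lt_irrefl _)
  · refine List.isChain_append.mpr ?_
    refine ⟨by
      rw [List.isChain_append]
      refine ⟨h₁ch.imp fun _ _ h => h.1, List.isChain_singleton _, ?_⟩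
      intro a ha b hb
      rw [h₁last] at ha; simp at ha hb; subst ha; subst hb; exact hxadj, ?_, ?_⟩
    · exact List.isChain_reverse.mpr (h₂ch.imp fun _ _ h => h.1.symm)
    · intro a ha b hb
      rw [List.getLast?_concat] at ha
      rw [List.head?_reverse, h₂last] at hb
      simp at ha hb
      subst ha; subst hb
      exact hyadj.symm
  · refine List.isChain_append.mpr ?_
    refine ⟨h₁ch.imp fun _ _ h => h.2, List.isChain_singleton _, ?_⟩
    intro a ha b hb
    rw [h₁last] at ha; simp at ha hb; subst ha; subst hb; exact hxlt
  · exact List.isChain_reverse.mpr (h₂ch.imp fun _ _ h => h.2)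
end Construct



lemma pigeonhole_color {V : Type*} [Fintype V] (f : V → ℕ) (hf : ∀ v, 0 < f v) {c : ℕ}
    (hc : c ≤ (Finset.univ.image f).card) [Nonempty V] :
    ∃ v, c ≤ f v := by
  by_contra h
  push_neg at h
  have hsub : Finset.univ.image f ⊆ Finset.Ioo 0 c := by
    intro i hi
    rw [Finset.mem_image] at hi
    obtain ⟨v, -, rfl⟩ := hi
    rw [Finset.mem_Ioo]
    exact ⟨hf v, h v⟩
  have := Finset.card_le_card hsub
  rw [Nat.card_Ioo] at this
  rcases Nat.eq_zero_or_pos c with rfl | hcpos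
  · obtain ⟨v⟩ := ‹Nonempty V›
    exact absurd (Nat.zero_le _) (not_le.mpr (h v))
  · omega

lemma nfact_bound {k : ℕ} (hk : 2 ≤ k) :
    ∀ c, k + 2 ≤ c → 2 ^ (2 * c - 2) * (2 * k).factorial * 2 ^ (c - (k + 1)) ≤
      4 ^ k * (2 * c - 2).factorial := by
  intro c hc
  induction c, hc using Nat.le_induction with
  | base =>
    have e1 : 2 * (k + 2) - 2 = 2 * k + 2 := by omega
    have e2 : (k + 2) - (k + 1) = 1 := by omega
    rw [e1, e2]
    have e3 : (2 * k + 2).factorial = (2 * k + 2) * ((2 * k + 1) * (2 * k).factorial) := by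
      rw [show (2 * k + 2) = (2 * k + 1) + 1 from rfl, Nat.factorial_succ, Nat.factorial_succ]
    have e4 : (4 : ℕ) ^ k = 2 ^ (2 * k) := by
      rw [show (4 : ℕ) = 2 ^ 2 from rfl, ← pow_mul]
    have e5 : (2 : ℕ) ^ (2 * k + 2) = 2 ^ (2 * k) * 4 := by
      rw [pow_add]; norm_num
    rw [e3, e4, e5]
    have h8 : 8 ≤ (2 * k + 2) * (2 * k + 1) := by nlinarith
    calc 2 ^ (2 * k) * 4 * (2 * k).factorial * 2 ^ 1
        = 2 ^ (2 * k) * (8 * (2 * k).factorial) := by ring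
      _ ≤ 2 ^ (2 * k) * ((2 * k + 2) * (2 * k + 1) * (2 * k).factorial) := by
          exact Nat.mul_le_mul_left _ (Nat.mul_le_mul_right _ h8)
      _ = 2 ^ (2 * k) * ((2 * k + 2) * ((2 * k + 1) * (2 * k).factorial)) := by ring
  | succ c hc ih =>
    have e1 : 2 * (c + 1) - 2 = (2 * c - 2) + 2 := by omega
    have e2 : (c + 1) - (k + 1) = (c - (k + 1)) + 1 := by omega
    rw [e1, e2]
    have e3 : ((2 * c - 2) + 2).factorial =
        ((2 * c - 2) + 2) * (((2 * c - 2) + 1) * (2 * c - 2).factorial) := by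
      rw [Nat.factorial_succ, Nat.factorial_succ]
    rw [e3]
    have h8 : 8 ≤ ((2 * c - 2) + 2) * ((2 * c - 2) + 1) := by
      calc 8 ≤ (2 * c - 2 + 2) * 1 := by omega
        _ ≤ _ := Nat.mul_le_mul_left _ (by omega)
    calc 2 ^ (2 * c - 2 + 2) * (2 * k).factorial * 2 ^ (c - (k + 1) + 1)
        = (2 ^ (2 * c - 2) * (2 * k).factorial * 2 ^ (c - (k + 1))) * 8 := by ring
      _ ≤ (4 ^ k * (2 * c - 2).factorial) * 8 := Nat.mul_le_mul_right _ ih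
      _ = 4 ^ k * (8 * (2 * c - 2).factorial) := by ring
      _ ≤ 4 ^ k * (((2 * c - 2) + 2) * ((2 * c - 2) + 1) * (2 * c - 2).factorial) :=
          Nat.mul_le_mul_left _ (Nat.mul_le_mul_right _ h8)
      _ = 4 ^ k * ((2 * c - 2 + 2) * ((2 * c - 2 + 1) * (2 * c - 2).factorial)) := by ring

lemma geom_tail_le (k : ℕ) : ∀ t : ℕ,
    (∑ c ∈ Finset.Icc (k + 2) t, ((2 : ℝ)⁻¹) ^ (c - (k + 1))) ≤ 1 - (2⁻¹ : ℝ) ^ (t - (k + 1)) := by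
  intro t
  induction t with
  | zero =>
    rw [show Finset.Icc (k + 2) 0 = ∅ by rw [Finset.Icc_eq_empty_iff]; omega]
    simp
  | succ t ih =>
    by_cases h : k + 2 ≤ t + 1
    · rw [Finset.sum_Icc_succ_top h]
      have e2 : (t + 1) - (k + 1) = (t - (k + 1)) + 1 := by omega
      rw [e2, pow_succ]
      have hpos : (0:ℝ) < (2⁻¹ : ℝ) ^ (t - (k + 1)) := by positivity
      linarith
    · rw [show Finset.Icc (k + 2) (t + 1) = ∅ by rw [Finset.Icc_eq_empty_iff]; omega,
        show (t + 1) - (k + 1) = 0 by omega]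
      simp

lemma real_term {k c : ℕ} (hk : 2 ≤ k) (hc : k + 2 ≤ c) :
    (2 : ℝ) ^ (2 * c - 2) / (Nat.factorial (2 * c - 2) : ℝ) ≤
      4 ^ k / (Nat.factorial (2 * k) : ℝ) * (2⁻¹) ^ (c - (k + 1)) := by
  have hN := nfact_bound hk c hc
  have hNr : (2 : ℝ) ^ (2 * c - 2) * (Nat.factorial (2 * k) : ℝ) * 2 ^ (c - (k + 1)) ≤
      4 ^ k * (Nat.factorial (2 * c - 2) : ℝ) := by
    have := (Nat.cast_le (α := ℝ)).mpr hN
    push_cast at this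
    convert this using 2 <;> norm_num
  rw [div_le_iff₀ (by positivity)]
  rw [div_mul_eq_mul_div, div_mul_eq_mul_div, le_div_iff₀ (by positivity)]
  calc (2 : ℝ) ^ (2 * c - 2) * Nat.factorial (2 * k)
      = ((2 : ℝ) ^ (2 * c - 2) * (Nat.factorial (2 * k) : ℝ) * 2 ^ (c - (k + 1))) *
        (2⁻¹) ^ (c - (k + 1)) := by
        rw [mul_assoc, ← mul_pow]
        norm_num
    _ ≤ (4 ^ k * (Nat.factorial (2 * c - 2) : ℝ)) * (2⁻¹) ^ (c - (k + 1)) := by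
        apply mul_le_mul_of_nonneg_right hNr (by positivity)
    _ = 4 ^ k * (2⁻¹) ^ (c - (k + 1)) * Nat.factorial (2 * c - 2) := by ring

section CountOuter
attribute [local instance] Classical.propDecidable

section Count
variable {V : Type*} [Fintype V] [DecidableEq V] {N : ℕ}

noncomputable def uniA (p : List V) (e : V ≃ Fin N) : Finset (Fin N) :=
  if h : UniOn p (fun v => (e v : ℕ)) then ((Classical.choose h).map e).toFinset else ∅

lemma compl_image (p : List V) (e : V ≃ Fin N) :
    Finset.univ \ Finset.univ.image (fun v : {v : V // v ∉ p} => e v.1) =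
      (p.map e).toFinset := by
  ext z
  simp only [Finset.mem_sdiff, Finset.mem_univ, true_and, Finset.mem_image,
    List.mem_toFinset, List.mem_map, not_exists]
  constructor
  · intro h
    by_cases hu : e.symm z ∈ p
    · exact ⟨e.symm z, hu, by simp⟩
    · exact absurd (by simp) (h ⟨e.symm z, hu⟩)
  · rintro ⟨u, hu, rfl⟩ ⟨v, hv⟩ hez
    have h2 : v = u := e.injective hez
    exact hv (h2 ▸ hu)

lemma uni_count (hcard : Fintype.card V = N) (p : List V) (hp : p.Nodup) :
    ((Finset.univ.filter (fun e : V ≃ Fin N => UniOn p (fun v => (e v : ℕ)))).card)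
      * (p.length).factorial ≤ 2 ^ p.length * N.factorial := by
  classical
  set m := p.length with hm
  have hmN : m ≤ N := hcard ▸ hp.length_le_card
  -- the subtype of vertices not on `p`
  have hcsub : Fintype.card {v : V // v ∉ p} = N - m := by
    rw [Fintype.card_subtype]
    have h1 : (Finset.univ.filter (fun v : V => v ∈ p)).card = m := by
      have : Finset.univ.filter (fun v : V => v ∈ p) = p.toFinset := by
        ext v; simp
      rw [this, List.toFinset_card_of_nodup hp]
    have h2 := Finset.card_filter_add_card_filter_not
      (s := (Finset.univ : Finset V)) (p := fun v : V => v ∈ p)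
    rw [Finset.card_univ, hcard] at h2
    omega
  have hcemb : Fintype.card ({v : V // v ∉ p} ↪ Fin N) = N.descFactorial (N - m) := by
    rw [Fintype.card_embedding_eq, hcsub, Fintype.card_fin]
  -- the target sigma set
  set Sg := (Finset.univ : Finset ({v : V // v ∉ p} ↪ Fin N)).sigma
    (fun r => ((Finset.univ : Finset (Fin N)) \
      Finset.univ.image (fun v => r v)).powerset) with hSg
  have hcardSg : Sg.card = N.descFactorial (N - m) * 2 ^ m := by
    rw [hSg, Finset.card_sigma]
    have : ∀ r : {v : V // v ∉ p} ↪ Fin N,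
        (((Finset.univ : Finset (Fin N)) \
          Finset.univ.image (fun v => r v)).powerset).card = 2 ^ m := by
      intro r
      rw [Finset.card_powerset, Finset.card_sdiff_of_subset (Finset.subset_univ _),
        Finset.card_univ, Finset.card_image_of_injective _ r.injective,
        Finset.card_univ, hcsub, Fintype.card_fin]
      congr 1
      omega
    rw [Finset.sum_congr rfl (fun r _ => this r), Finset.sum_const, Finset.card_univ,
      hcemb, smul_eq_mul]
  -- the injection
  set f : (V ≃ Fin N) → Σ _ : {v : V // v ∉ p} ↪ Fin N, Finset (Fin N) :=
    fun e => ⟨⟨fun v => e v.1, fun a b hab => Subtype.ext (e.injective hab)⟩, uniA p e⟩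
    with hf
  have hcf : (Finset.univ.filter
      (fun e : V ≃ Fin N => UniOn p (fun v => (e v : ℕ)))).card ≤ Sg.card := by
    apply Finset.card_le_card_of_injOn f
    · -- maps into
      intro e he
      rw [Finset.mem_coe, Finset.mem_filter] at he
      obtain ⟨-, hu⟩ := he
      rw [hSg, Finset.mem_coe, Finset.mem_sigma]
      refine ⟨Finset.mem_univ _, ?_⟩
      rw [Finset.mem_powerset]
      show uniA p e ⊆ _
      rw [uniA, dif_pos hu]
      have hspec := Classical.choose_spec hu
      obtain ⟨b, hab, -, -⟩ := hspec
      have : Finset.univ \ Finset.univ.image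
          (fun v : {v : V // v ∉ p} => e v.1) = (p.map e).toFinset := compl_image p e
      rw [hf]
      simp only [Function.Embedding.coeFn_mk]
      refine Finset.Subset.trans ?_ (le_of_eq this.symm)
      intro z hz
      rw [List.mem_toFinset] at hz ⊢
      rw [hab, List.map_append]
      exact List.mem_append_left _ hz
    · -- injective
      intro e he e' he' hee
      simp only [Finset.coe_filter, Set.mem_setOf_eq] at he he'
      obtain ⟨-, hu⟩ := he
      obtain ⟨-, hu'⟩ := he'
      rw [hf] at hee
      simp only [Sigma.mk.inj_iff] at hee
      obtain ⟨hr, hA⟩ := hee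
      have hA' : uniA p e = uniA p e' := eq_of_heq hA
      have hrest : ∀ (v : V) (hv : v ∉ p), e v = e' v := by
        intro v hv
        have := congrArg (fun g : {v : V // v ∉ p} ↪ Fin N => g ⟨v, hv⟩) hr
        exact this
      -- the images of p agree
      have hS : (p.map e).toFinset = (p.map e').toFinset := by
        rw [← compl_image p e, ← compl_image p e']
        congr 1
        ext z
        simp only [Finset.mem_image]
        constructor
        · rintro ⟨v, -, rfl⟩; exact ⟨v, Finset.mem_univ v, (hrest v.1 v.2).symm⟩
        · rintro ⟨v, -, rfl⟩; exact ⟨v, Finset.mem_univ v, hrest v.1 v.2⟩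
      -- decompositions
      obtain ⟨b, hab, hca, hcb⟩ := Classical.choose_spec hu
      obtain ⟨b', hab', hca', hcb'⟩ := Classical.choose_spec hu'
      set a := Classical.choose hu with ha
      set a' := Classical.choose hu' with ha'
      haveI : IsTrans (Fin N) (· < ·) := ⟨fun _ _ _ h1 h2 => lt_trans h1 h2⟩
      haveI : IsTrans (Fin N) (· > ·) := ⟨fun _ _ _ h1 h2 => lt_trans h2 h1⟩
      haveI : IsAntisymm (Fin N) (· < ·) := ⟨fun _ _ h1 h2 => absurd h2 (asymm h1)⟩
      haveI : IsAntisymm (Fin N) (· > ·) := ⟨fun _ _ h1 h2 => absurd h2 (asymm h1)⟩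
      have key : ∀ (ee : V ≃ Fin N) (aa bb : List V), p = aa ++ bb →
          List.Chain' (fun u w => (ee u : ℕ) < (ee w : ℕ)) aa →
          List.Chain' (fun u w => (ee w : ℕ) < (ee u : ℕ)) bb →
          List.Pairwise (· < ·) (aa.map ee) ∧ List.Pairwise (· > ·) (bb.map ee) ∧
          (aa.map ee).Nodup ∧ (bb.map ee).Nodup ∧
          ((bb.map ee).toFinset = (p.map ee).toFinset \ (aa.map ee).toFinset) := by
        intro ee aa bb hpab hcaa hcbb
        have hnaa : aa.Nodup := ((hpab ▸ hp).sublist (List.sublist_append_left aa bb))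
        have hnbb : bb.Nodup := ((hpab ▸ hp).sublist (List.sublist_append_right aa bb))
        have hsa : List.Pairwise (· < ·) (aa.map ee) := by
          rw [← List.isChain_iff_pairwise]
          exact (List.isChain_map ee).mpr (hcaa.imp fun _ _ h => Fin.lt_def.mpr h)
        have hsb : List.Pairwise (· > ·) (bb.map ee) := by
          rw [← List.isChain_iff_pairwise]
          exact (List.isChain_map ee).mpr (hcbb.imp fun _ _ h => Fin.lt_def.mpr h)
        have hna : (aa.map ee).Nodup := List.Nodup.map ee.injective hnaa
        have hnb : (bb.map ee).Nodup := List.Nodup.map ee.injective hnbb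
        refine ⟨hsa, hsb, hna, hnb, ?_⟩
        have hpn : (p.map ee).Nodup := List.Nodup.map ee.injective hp
        ext z
        rw [Finset.mem_sdiff]
        simp only [List.mem_toFinset]
        rw [hpab, List.map_append]
        constructor
        · intro hz
          have hd := (List.nodup_append'.mp
            (by rw [hpab, List.map_append] at hpn; exact hpn)).2.2
          exact ⟨List.mem_append_right _ hz, fun hz' => hd hz' hz⟩
        · rintro ⟨hz, hz'⟩
          rcases List.mem_append.mp hz with h | h
          · exact absurd h hz'
          · exact h
      obtain ⟨hsa, hsb, hna, hnb, hBfin⟩ := key e a b hab hca hcb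
      obtain ⟨hsa', hsb', hna', hnb', hBfin'⟩ := key e' a' b' hab' hca' hcb'
      have hAfin : (a.map e).toFinset = (a'.map e').toFinset := by
        have h1 : uniA p e = (a.map e).toFinset := by rw [uniA, dif_pos hu]
        have h2 : uniA p e' = (a'.map e').toFinset := by rw [uniA, dif_pos hu']
        rw [← h1, ← h2, hA']
      have haa : a.map e = a'.map e' :=
        List.Perm.eq_of_pairwise' hsa hsa'
          (List.perm_of_nodup_nodup_toFinset_eq hna hna' hAfin)
      have hbb : b.map e = b'.map e' :=
        List.Perm.eq_of_pairwise' hsb hsb'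
          (List.perm_of_nodup_nodup_toFinset_eq hnb hnb'
            (by rw [hBfin, hBfin', hAfin, hS]))
      have hmap : p.map e = p.map e' := by
        conv_lhs => rw [hab]
        conv_rhs => rw [hab']
        rw [List.map_append, List.map_append, haa, hbb]
      have hinp : ∀ v ∈ p, e v = e' v := by
        intro v hv
        -- extract pointwise equality from map equality
        have : ∀ (q : List V), q.map e = q.map e' → ∀ v ∈ q, e v = e' v := by
          intro q
          induction q with
          | nil => intro _ v hv; simp at hv
          | cons x q ih =>
            intro hq v hv
            simp only [List.map_cons, List.cons.injEq] at hq
            rcases List.mem_cons.mp hv with rfl | hv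
            · exact hq.1
            · exact ih hq.2 v hv
        exact this p hmap v hv
      apply Equiv.ext
      intro v
      by_cases hv : v ∈ p
      · exact hinp v hv
      · exact hrest v hv
  -- combine
  calc (Finset.univ.filter
      (fun e : V ≃ Fin N => UniOn p (fun v => (e v : ℕ)))).card * m.factorial
      ≤ Sg.card * m.factorial := Nat.mul_le_mul_right _ hcf
    _ = N.descFactorial (N - m) * 2 ^ m * m.factorial := by rw [hcardSg]
    _ = 2 ^ m * (m.factorial * N.descFactorial (N - m)) := by ring
    _ = 2 ^ m * N.factorial := by
        congr 1
        have := Nat.factorial_mul_descFactorial (n := N) (k := N - m) (by omega)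
        rwa [show N - (N - m) = m by omega] at this
end Count
end CountOuter



/-- For a forest `T` on `n` vertices and any integer `k ≥ 2`, the expected number of colors
used by First-Fit in a uniformly random order is at most `k + 1 + n²·4^k/(2k)!`. -/
theorem ff_expect_upper (n : ℕ) (T : SimpleGraph (Fin n)) (hT : T.IsAcyclic)
    (k : ℕ) (hk : 2 ≤ k) :
    ffExpect T ≤ (k : ℝ) + 1 + (n : ℝ) ^ 2 * 4 ^ k / (Nat.factorial (2 * k) : ℝ) := by
  classical
  letI : DecidableEq (Fin n) := Classical.decEq (Fin n)
  set N := Fintype.card (Fin n) with hN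
  have hNn : N = n := Fintype.card_fin n
  set Num : (Fin n ≃ Fin N) → ℕ := fun e => ffNumColors T (fun v => (e v : ℕ)) with hNum
  have hexp : ffExpect T = (∑ e : Fin n ≃ Fin N, (Num e : ℝ)) / (N.factorial : ℝ) := by
    rw [ffExpect]
  have hcardE : Fintype.card (Fin n ≃ Fin N) = N.factorial := by
    rw [Fintype.card_equiv (Fintype.equivFin (Fin n))]
  have hNumle : ∀ e, Num e ≤ n := by
    intro e
    have h1 : Num e ≤ (Finset.univ : Finset (Fin n)).card := Finset.card_image_le
    rwa [Finset.card_univ, Fintype.card_fin] at h1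
  have hpere : ∀ e, Num e ≤ (k + 1) +
      ((Finset.Icc (k + 2) n).filter (fun c => c ≤ Num e)).card := by
    intro e
    by_cases h : Num e ≤ k + 1
    · omega
    · have hne := hNumle e
      have h1 : (Finset.Icc (k + 2) n).filter (fun c => c ≤ Num e) =
          Finset.Icc (k + 2) (Num e) := by
        ext c
        simp only [Finset.mem_filter, Finset.mem_Icc]
        omega
      rw [h1, Nat.card_Icc]
      omega
  set Bad : ℕ → Finset (Fin n ≃ Fin N) :=
    fun c => Finset.univ.filter (fun e => c ≤ Num e) with hBad
  have hswap : (∑ e : Fin n ≃ Fin N,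
        ((Finset.Icc (k + 2) n).filter (fun c => c ≤ Num e)).card)
      = ∑ c ∈ Finset.Icc (k + 2) n, (Bad c).card := by
    calc (∑ e : Fin n ≃ Fin N,
          ((Finset.Icc (k + 2) n).filter (fun c => c ≤ Num e)).card)
        = ∑ e : Fin n ≃ Fin N, ∑ c ∈ Finset.Icc (k + 2) n, if c ≤ Num e then 1 else 0 :=
          Finset.sum_congr rfl (fun e _ => Finset.card_filter _ _)
      _ = ∑ c ∈ Finset.Icc (k + 2) n, ∑ e : Fin n ≃ Fin N, if c ≤ Num e then 1 else 0 :=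
          Finset.sum_comm
      _ = ∑ c ∈ Finset.Icc (k + 2) n, (Bad c).card :=
          Finset.sum_congr rfl (fun c _ => (Finset.card_filter _ _).symm)
  -- the key combinatorial bound for each color value c
  have hbadc : ∀ c ∈ Finset.Icc (k + 2) n,
      (Bad c).card * (2 * c - 2).factorial ≤ n ^ 2 * 2 ^ (2 * c - 2) * N.factorial := by
    intro c hcmem
    rw [Finset.mem_Icc] at hcmem
    obtain ⟨hc2, hcn⟩ := hcmem
    set E : Fin n → Fin n → Finset (Fin n ≃ Fin N) := fun x y => Finset.univ.filter
      (fun e => ∃ l : List (Fin n), l.Nodup ∧ List.Chain' T.Adj l ∧ l.length = 2 * c - 2 ∧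
        l.head? = some x ∧ l.getLast? = some y ∧ UniOn l (fun v => ((e v : Fin N) : ℕ))) with hE
    have hsubbi : Bad c ⊆ (Finset.univ ×ˢ Finset.univ).biUnion
        (fun q : Fin n × Fin n => E q.1 q.2) := by
      intro e he
      rw [hBad, Finset.mem_filter] at he
      haveI : Nonempty (Fin n) := by
        rcases Nat.eq_zero_or_pos n with rfl | hpos
        · exfalso
          have := hNumle e
          omega
        · exact ⟨⟨0, hpos⟩⟩
      obtain ⟨v, hv⟩ := pigeonhole_color (ffColor T (fun v => ((e v : Fin N) : ℕ)))
        (ffColor_pos T _) he.2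
      obtain ⟨l, hlen, hnd, hch, huni⟩ := exists_uni_list T (fun v => ((e v : Fin N) : ℕ)) hT
        (show 3 ≤ c by omega) hv
      have hlne : l ≠ [] := by
        intro h
        rw [h] at hlen
        simp at hlen
        omega
      refine Finset.mem_biUnion.mpr ⟨(l.head hlne, l.getLast hlne),
        Finset.mem_product.mpr ⟨Finset.mem_univ _, Finset.mem_univ _⟩, ?_⟩
      rw [hE, Finset.mem_filter]
      exact ⟨Finset.mem_univ _, l, hnd, hch, hlen, List.head?_eq_head hlne,
        l.getLast?_eq_getLast hlne, huni⟩
    have hExy : ∀ x y : Fin n,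
        (E x y).card * (2 * c - 2).factorial ≤ 2 ^ (2 * c - 2) * N.factorial := by
      intro x y
      rcases (E x y).eq_empty_or_nonempty with hemp | hne
      · rw [hemp]
        simp
      · obtain ⟨e₁, he₁⟩ := hne
        rw [hE, Finset.mem_filter] at he₁
        obtain ⟨-, l₀, h₀nd, h₀ch, h₀len, h₀h, h₀l, -⟩ := he₁
        have hsub2 : E x y ⊆ Finset.univ.filter
            (fun e : Fin n ≃ Fin N => UniOn l₀ (fun v => ((e v : Fin N) : ℕ))) := by
          intro e he
          rw [hE, Finset.mem_filter] at he
          obtain ⟨-, l, hnd, hch, hlen, hh, hl, hu⟩ := he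
          have hlne : l ≠ [] := fun h => by rw [h] at hh; simp at hh
          have h₀lne : l₀ ≠ [] := fun h => by rw [h] at h₀h; simp at h₀h
          have hll : l = l₀ :=
            chain_eq_of_acyclic' T hT hlne h₀lne hch h₀ch hnd h₀nd hh h₀h hl h₀l
          rw [Finset.mem_filter]
          exact ⟨Finset.mem_univ _, hll ▸ hu⟩
        have hcount := uni_count (V := Fin n) (N := N) hN.symm l₀ h₀nd
        rw [h₀len] at hcount
        calc (E x y).card * (2 * c - 2).factorial
            ≤ (Finset.univ.filter
                (fun e : Fin n ≃ Fin N => UniOn l₀ (fun v => ((e v : Fin N) : ℕ)))).card *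
              (2 * c - 2).factorial :=
              Nat.mul_le_mul_right _ (Finset.card_le_card hsub2)
          _ ≤ 2 ^ (2 * c - 2) * N.factorial := hcount
    calc (Bad c).card * (2 * c - 2).factorial
        ≤ ((Finset.univ ×ˢ Finset.univ).biUnion
            (fun q : Fin n × Fin n => E q.1 q.2)).card * (2 * c - 2).factorial :=
          Nat.mul_le_mul_right _ (Finset.card_le_card hsubbi)
      _ ≤ (∑ q ∈ Finset.univ ×ˢ Finset.univ, (E q.1 q.2).card) * (2 * c - 2).factorial :=
          Nat.mul_le_mul_right _ Finset.card_biUnion_le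
      _ = ∑ q ∈ Finset.univ ×ˢ Finset.univ, (E q.1 q.2).card * (2 * c - 2).factorial :=
          Finset.sum_mul _ _ _
      _ ≤ ∑ _q ∈ (Finset.univ : Finset (Fin n)) ×ˢ Finset.univ,
            2 ^ (2 * c - 2) * N.factorial :=
          Finset.sum_le_sum (fun q _ => hExy q.1 q.2)
      _ = n ^ 2 * 2 ^ (2 * c - 2) * N.factorial := by
          rw [Finset.sum_const, smul_eq_mul, Finset.card_product, Finset.card_univ,
            Fintype.card_fin]
          ring
  -- pass to the reals
  have hfacpos : (0 : ℝ) < (N.factorial : ℝ) := by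
    exact_mod_cast Nat.factorial_pos N
  rw [hexp, div_le_iff₀ hfacpos]
  have hstep1 : (∑ e : Fin n ≃ Fin N, Num e) ≤
      (k + 1) * N.factorial + ∑ c ∈ Finset.Icc (k + 2) n, (Bad c).card := by
    calc ∑ e : Fin n ≃ Fin N, Num e
        ≤ ∑ e : Fin n ≃ Fin N, ((k + 1) +
            ((Finset.Icc (k + 2) n).filter (fun c => c ≤ Num e)).card) :=
          Finset.sum_le_sum (fun e _ => hpere e)
      _ = (Finset.univ : Finset (Fin n ≃ Fin N)).card * (k + 1) +
            ∑ e : Fin n ≃ Fin N,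
              ((Finset.Icc (k + 2) n).filter (fun c => c ≤ Num e)).card := by
          rw [Finset.sum_add_distrib, Finset.sum_const, smul_eq_mul]
      _ = (k + 1) * N.factorial + ∑ c ∈ Finset.Icc (k + 2) n, (Bad c).card := by
          rw [hswap, Finset.card_univ, hcardE, mul_comm]
  have hbadr : ∀ c ∈ Finset.Icc (k + 2) n, ((Bad c).card : ℝ) ≤
      (N.factorial : ℝ) * ((n : ℝ) ^ 2 * (4 ^ k / (Nat.factorial (2 * k) : ℝ))) *
        (2⁻¹) ^ (c - (k + 1)) := by
    intro c hcmem
    have h1 := hbadc c hcmem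
    have hcm := Finset.mem_Icc.mp hcmem
    have hfpos : (0 : ℝ) < ((2 * c - 2).factorial : ℝ) := by
      exact_mod_cast Nat.factorial_pos _
    have h2 : ((Bad c).card : ℝ) ≤
        (n : ℝ) ^ 2 * (N.factorial : ℝ) *
          ((2 : ℝ) ^ (2 * c - 2) / ((2 * c - 2).factorial : ℝ)) := by
      rw [mul_div_assoc', le_div_iff₀ hfpos]
      calc ((Bad c).card : ℝ) * ((2 * c - 2).factorial : ℝ)
          = (((Bad c).card * (2 * c - 2).factorial : ℕ) : ℝ) := by push_cast; ring
        _ ≤ ((n ^ 2 * 2 ^ (2 * c - 2) * N.factorial : ℕ) : ℝ) := by exact_mod_cast h1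
        _ = (n : ℝ) ^ 2 * (N.factorial : ℝ) * (2 : ℝ) ^ (2 * c - 2) := by push_cast; ring
    have h3 := real_term hk hcm.1
    calc ((Bad c).card : ℝ)
        ≤ (n : ℝ) ^ 2 * (N.factorial : ℝ) *
            ((2 : ℝ) ^ (2 * c - 2) / ((2 * c - 2).factorial : ℝ)) := h2
      _ ≤ (n : ℝ) ^ 2 * (N.factorial : ℝ) *
            (4 ^ k / (Nat.factorial (2 * k) : ℝ) * (2⁻¹) ^ (c - (k + 1))) := by
          apply mul_le_mul_of_nonneg_left h3 (by positivity)
      _ = (N.factorial : ℝ) * ((n : ℝ) ^ 2 * (4 ^ k / (Nat.factorial (2 * k) : ℝ))) *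
            (2⁻¹) ^ (c - (k + 1)) := by ring
  have hsum2 : (∑ c ∈ Finset.Icc (k + 2) n, ((Bad c).card : ℝ)) ≤
      (N.factorial : ℝ) * ((n : ℝ) ^ 2 * (4 ^ k / (Nat.factorial (2 * k) : ℝ))) := by
    set C : ℝ := (N.factorial : ℝ) * ((n : ℝ) ^ 2 * (4 ^ k / (Nat.factorial (2 * k) : ℝ)))
      with hC
    have hCpos : (0 : ℝ) ≤ C := by rw [hC]; positivity
    calc ∑ c ∈ Finset.Icc (k + 2) n, ((Bad c).card : ℝ)
        ≤ ∑ c ∈ Finset.Icc (k + 2) n, C * (2⁻¹) ^ (c - (k + 1)) :=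
          Finset.sum_le_sum hbadr
      _ = C * ∑ c ∈ Finset.Icc (k + 2) n, ((2 : ℝ)⁻¹) ^ (c - (k + 1)) := by
          rw [Finset.mul_sum]
      _ ≤ C * 1 := by
          apply mul_le_mul_of_nonneg_left _ hCpos
          have := geom_tail_le k n
          have hp : (0 : ℝ) ≤ (2⁻¹ : ℝ) ^ (n - (k + 1)) := by positivity
          linarith
      _ = C := mul_one C
  have hstep1r : (∑ e : Fin n ≃ Fin N, (Num e : ℝ)) ≤
      ((k : ℝ) + 1) * (N.factorial : ℝ) + ∑ c ∈ Finset.Icc (k + 2) n, ((Bad c).card : ℝ) := by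
    have h := (Nat.cast_le (α := ℝ)).mpr hstep1
    push_cast at h
    exact h
  calc (∑ e : Fin n ≃ Fin N, (Num e : ℝ))
      ≤ ((k : ℝ) + 1) * (N.factorial : ℝ) +
          ∑ c ∈ Finset.Icc (k + 2) n, ((Bad c).card : ℝ) := hstep1r
    _ ≤ ((k : ℝ) + 1) * (N.factorial : ℝ) +
          (N.factorial : ℝ) * ((n : ℝ) ^ 2 * (4 ^ k / (Nat.factorial (2 * k) : ℝ))) := by
        linarith
    _ = ((k : ℝ) + 1 + (n : ℝ) ^ 2 * 4 ^ k / (Nat.factorial (2 * k) : ℝ)) *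
          (N.factorial : ℝ) := by ring
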